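/- arXiv:2509.15889 — 3 statements merged into one kernel-verified Lean document; each statement's English description precedes it below -/
import Mathlib

section
/- Suppose the Hill coefficients satisfy n_i ≥ 1 for all i ∈ {1,…,n} and the cooperativity coefficient satisfies m ≥ 1. Then the first partial derivatives of the regulatory function H are uniformly bounded on the positive orthant: there exists a constant C > 0 such that |∂H/∂y_k(y)| ≤ C for every k ∈ {1,…,n} and every y in the open positive orthant {y ∈ ℝⁿ : y_i > 0 for all i}. -/
/-!
Write `H = a / (a + b)` with `a = S ^ m` and `b = K ^ m * T ^ m`, where `S = ∑ wᵢ yᵢ ^ νᵢ` and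
`T = 1 + ∑ (yⱼ / Kⱼ) ^ νⱼ ≥ 1`. The quotient rule gives `|∂H| ≤ |∂a| / (a + b) + |∂b| / b`.

The inhibition term is `|∂b| / b = m |∂T| / T`, bounded because `u ^ (ν - 1) ≤ 1 + u ^ ν ≤ T`
for `u = yₖ / Kₖ`.

For the activation term, `w yₖ ^ ν ≤ S` gives `w yₖ ^ (ν - 1) ≤ w ^ (1/ν) S ^ (1 - 1/ν)`, so
`|∂a| ≤ m ν w ^ (1/ν) S ^ (m - 1/ν)`, and weighted AM-GM between `S ^ m` and `K ^ m` gives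
`S ^ (m - 1/ν) K ^ (1/ν) ≤ a + b`.
-/

open Finset

section QuotientRule

variable {E : Type*} [NormedAddCommGroup E] [NormedSpace ℝ E] {a b : E → ℝ} {a' b' : E →L[ℝ] ℝ}
  {y : E}

theorem HasFDerivAt.div_add_self (ha : HasFDerivAt a a' y) (hb : HasFDerivAt b b' y)
    (hab : a y + b y ≠ 0) :
    HasFDerivAt (fun z => a z / (a z + b z)) (((a y + b y) ^ 2)⁻¹ • (b y • a' - a y • b')) y := by
  simp only [div_eq_mul_inv]
  refine (ha.mul ((hasDerivAt_inv hab).comp_hasFDerivAt y (ha.add hb))).congr_fderiv ?_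
  ext v
  simp only [smul_add, neg_smul, smul_neg, Function.comp_apply, Pi.add_apply,
    add_apply, neg_apply, smul_apply, sub_apply, smul_eq_mul]
  field_simp
  ring

theorem abs_sub_div_add_sq_le {a b α β : ℝ} (ha : 0 ≤ a) (hb : 0 < b) :
    |(b * α - a * β) / (a + b) ^ 2| ≤ |α| / (a + b) + |β| / b := by
  have hab : 0 < a + b := by positivity
  have hα : b * |α| / (a + b) ^ 2 ≤ |α| / (a + b) := by
    rw [div_le_div_iff₀ (by positivity) hab]
    nlinarith [mul_nonneg (abs_nonneg α) (mul_nonneg ha hab.le)]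
  have hβ : a * |β| / (a + b) ^ 2 ≤ |β| / b := by
    rw [div_le_div_iff₀ (by positivity) hb]
    nlinarith [mul_nonneg (abs_nonneg β) (by positivity : 0 ≤ a ^ 2 + a * b + b ^ 2)]
  calc |(b * α - a * β) / (a + b) ^ 2| = |b * α - a * β| / (a + b) ^ 2 := by
        rw [abs_div, abs_of_pos (pow_pos hab 2)]
    _ ≤ (b * |α| + a * |β|) / (a + b) ^ 2 := by
        gcongr
        calc |b * α - a * β| ≤ |b * α| + |a * β| := abs_sub _ _
          _ = b * |α| + a * |β| := by rw [abs_mul, abs_mul, abs_of_pos hb, abs_of_nonneg ha]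
    _ = b * |α| / (a + b) ^ 2 + a * |β| / (a + b) ^ 2 := add_div _ _ _
    _ ≤ |α| / (a + b) + |β| / b := add_le_add hα hβ

theorem HasFDerivAt.abs_fderiv_div_add_le (ha : HasFDerivAt a a' y) (hb : HasFDerivAt b b' y)
    (ha₀ : 0 ≤ a y) (hb₀ : 0 < b y) (v : E) :
    |fderiv ℝ (fun z => a z / (a z + b z)) y v| ≤ |a' v| / (a y + b y) + |b' v| / b y := by
  rw [(ha.div_add_self hb (by positivity)).fderiv]
  convert abs_sub_div_add_sq_le (α := a' v) (β := b' v) ha₀ hb₀ using 2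
  simp only [smul_apply, sub_apply, smul_eq_mul]
  ring

end QuotientRule

section SeparableSum

variable {ι : Type*}

theorem hasFDerivAt_sum_comp_apply [Fintype ι] (s : Finset ι) {f : ι → ℝ → ℝ} {f' : ι → ℝ}
    {y : ι → ℝ} (hf : ∀ i ∈ s, HasDerivAt (f i) (f' i) (y i)) :
    HasFDerivAt (fun z : ι → ℝ => ∑ i ∈ s, f i (z i))
      (∑ i ∈ s, f' i • ContinuousLinearMap.proj (R := ℝ) (φ := fun _ : ι => ℝ) i) y :=
  HasFDerivAt.fun_sum fun i hi => (hf i hi).comp_hasFDerivAt y (hasFDerivAt_apply i y)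

theorem sum_smul_proj_apply_single [DecidableEq ι] (s : Finset ι) (d : ι → ℝ) (k : ι) :
    (∑ i ∈ s, d i • ContinuousLinearMap.proj (R := ℝ) (φ := fun _ : ι => ℝ) i) (Pi.single k 1)
      = if k ∈ s then d k else 0 := by
  simp [Pi.single_apply]

end SeparableSum

namespace Real

theorem rpow_sub_one_le_one_add_rpow {u ν : ℝ} (hu : 0 ≤ u) (hν : 1 ≤ ν) :
    u ^ (ν - 1) ≤ 1 + u ^ ν := by
  rcases le_total u 1 with h | h
  · linarith [rpow_le_one hu h (by linarith : 0 ≤ ν - 1), rpow_nonneg hu ν]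
  · linarith [rpow_le_rpow_of_exponent_le h (by linarith : ν - 1 ≤ ν)]

theorem mul_rpow_sub_one_le {w y S ν : ℝ} (hw : 0 < w) (hy : 0 ≤ y) (hν : 1 ≤ ν)
    (h : w * y ^ ν ≤ S) : w * y ^ (ν - 1) ≤ w ^ ν⁻¹ * S ^ (1 - ν⁻¹) := by
  have hsplit : w * y ^ (ν - 1) = w ^ ν⁻¹ * (w * y ^ ν) ^ (1 - ν⁻¹) := by
    rw [mul_rpow hw.le (rpow_nonneg hy ν), ← rpow_mul hy, ← mul_assoc, ← rpow_add hw,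
      add_sub_cancel, rpow_one, mul_sub, mul_one, mul_inv_cancel₀ (by positivity)]
  rw [hsplit]
  gcongr
  exact sub_nonneg.2 (inv_le_one_of_one_le₀ hν)

theorem rpow_sub_mul_rpow_le {S K D m p : ℝ} (hS : 0 ≤ S) (hK : 0 ≤ K) (hm : 0 < m) (hp : 0 ≤ p)
    (hpm : p ≤ m) (hSD : S ^ m ≤ D) (hKD : K ^ m ≤ D) : S ^ (m - p) * K ^ p ≤ D := by
  have hq : 0 ≤ p / m := by positivity
  have hq' : 0 ≤ 1 - p / m := sub_nonneg.2 ((div_le_one hm).2 hpm)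
  calc S ^ (m - p) * K ^ p = (S ^ m) ^ (1 - p / m) * (K ^ m) ^ (p / m) := by
        rw [← rpow_mul hS, ← rpow_mul hK]
        congr 2 <;> field_simp
    _ ≤ (1 - p / m) * S ^ m + p / m * K ^ m :=
        geom_mean_le_arith_mean2_weighted hq' hq (by positivity) (by positivity) (by ring)
    _ ≤ (1 - p / m) * D + p / m * D := by gcongr
    _ = D := by ring

end Real

section HillFunction

open Real

variable {ι : Type*} [DecidableEq ι] (s : Finset ι) {ν y : ι → ℝ} {m : ℝ}

theorem abs_activation_partial_div_le {w : ι → ℝ} {K D : ℝ} (hw : ∀ i ∈ s, 0 < w i)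
    (hν : ∀ i, 1 ≤ ν i) (hy : ∀ i, 0 < y i) (hm : 1 ≤ m) (hK : 0 < K)
    (hSD : (∑ i ∈ s, w i * y i ^ ν i) ^ m ≤ D) (hKD : K ^ m ≤ D) (k : ι) :
    |m * (∑ i ∈ s, w i * y i ^ ν i) ^ (m - 1) *
        (if k ∈ s then w k * (ν k * y k ^ (ν k - 1)) else 0)| / D
      ≤ if k ∈ s then m * ν k * w k ^ (ν k)⁻¹ / K ^ (ν k)⁻¹ else 0 := by
  split_ifs with hk
  · set S := ∑ i ∈ s, w i * y i ^ ν i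
    have hwk := hw k hk
    have hS : w k * y k ^ ν k ≤ S :=
      single_le_sum (fun i hi => (mul_pos (hw i hi) (rpow_pos_of_pos (hy i) _)).le) hk
    have hS₀ : 0 < S := lt_of_lt_of_le (mul_pos hwk (rpow_pos_of_pos (hy k) _)) hS
    have hD : 0 < D := lt_of_lt_of_le (rpow_pos_of_pos hK m) hKD
    have hexp : S ^ (m - 1) * S ^ (1 - (ν k)⁻¹) = S ^ (m - (ν k)⁻¹) := by
      rw [← rpow_add hS₀]; ring_nf
    have hνk : 0 < ν k := lt_of_lt_of_le one_pos (hν k)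
    rw [abs_of_nonneg (by have := hy k; positivity), div_le_div_iff₀ hD (by positivity)]
    calc m * S ^ (m - 1) * (w k * (ν k * y k ^ (ν k - 1))) * K ^ (ν k)⁻¹
        = m * ν k * S ^ (m - 1) * (w k * y k ^ (ν k - 1)) * K ^ (ν k)⁻¹ := by ring
      _ ≤ m * ν k * S ^ (m - 1) * (w k ^ (ν k)⁻¹ * S ^ (1 - (ν k)⁻¹)) * K ^ (ν k)⁻¹ := by
        gcongr m * ν k * S ^ (m - 1) * ?_ * K ^ (ν k)⁻¹
        exact mul_rpow_sub_one_le hwk (hy k).le (hν k) hS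
      _ = m * ν k * w k ^ (ν k)⁻¹ * (S ^ (m - (ν k)⁻¹) * K ^ (ν k)⁻¹) := by rw [← hexp]; ring
      _ ≤ m * ν k * w k ^ (ν k)⁻¹ * D := by
        gcongr
        exact rpow_sub_mul_rpow_le hS₀.le hK.le (by linarith) (by positivity)
          ((inv_le_one_of_one_le₀ (hν k)).trans hm) hSD hKD
  · simp

theorem abs_inhibition_partial_div_le {κ : ι → ℝ} {c : ℝ} (hκ : ∀ j ∈ s, 0 < κ j)
    (hν : ∀ i, 1 ≤ ν i) (hy : ∀ i, 0 < y i) (hm : 0 ≤ m) (hc : 0 < c) (k : ι) :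
    |c * (m * (1 + ∑ j ∈ s, (y j / κ j) ^ ν j) ^ (m - 1) *
        (if k ∈ s then 1 / κ k * ν k * (y k / κ k) ^ (ν k - 1) else 0))|
        / (c * (1 + ∑ j ∈ s, (y j / κ j) ^ ν j) ^ m)
      ≤ if k ∈ s then m * ν k / κ k else 0 := by
  split_ifs with hk
  · set T := 1 + ∑ j ∈ s, (y j / κ j) ^ ν j
    have hκk := hκ k hk
    have hu : 0 ≤ y k / κ k := (div_pos (hy k) hκk).le
    have hT : 1 + (y k / κ k) ^ ν k ≤ T := add_le_add_right
      (single_le_sum (fun j hj => rpow_nonneg (div_pos (hy j) (hκ j hj)).le _) hk) 1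
    have hT₀ : 0 < T := by linarith [rpow_nonneg hu (ν k)]
    have hpow : T ^ (m - 1) * T = T ^ m := by rw [← rpow_add_one hT₀.ne']; ring_nf
    have hνk : 0 < ν k := lt_of_lt_of_le one_pos (hν k)
    rw [abs_of_nonneg (by positivity), div_le_iff₀ (by positivity)]
    calc c * (m * T ^ (m - 1) * (1 / κ k * ν k * (y k / κ k) ^ (ν k - 1)))
        = m * ν k / κ k * (c * T ^ (m - 1) * (y k / κ k) ^ (ν k - 1)) := by ring
      _ ≤ m * ν k / κ k * (c * T ^ (m - 1) * T) := by
        gcongr; exact (rpow_sub_one_le_one_add_rpow hu (hν k)).trans hT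
      _ = m * ν k / κ k * (c * T ^ m) := by rw [mul_assoc c, hpow]
  · simp

end HillFunction

/-- If all Hill coefficients satisfy `n_i ≥ 1` and the cooperativity
coefficient satisfies `m ≥ 1`, then the first partial derivatives of the regulatory
function `H = A / (A + B)` are uniformly bounded on the open positive orthant. -/
theorem regulatory_function_bounded_partial_derivatives
    (n : ℕ) (𝒜 ℐ : Finset (Fin n))
    (w : Fin n → ℝ) (hw : ∀ i ∈ 𝒜, 0 < w i)
    (ν : Fin n → ℝ) (hν : ∀ i, 1 ≤ ν i)
    (m : ℝ) (hm : 1 ≤ m)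
    (K : ℝ) (hK : 0 < K)
    (Kinh : Fin n → ℝ) (hKinh : ∀ j ∈ ℐ, 0 < Kinh j)
    (A B H : (Fin n → ℝ) → ℝ)
    (hA : ∀ y, A y = (∑ i ∈ 𝒜, w i * (y i) ^ (ν i)) ^ m)
    (hB : ∀ y, B y = K ^ m * (1 + ∑ j ∈ ℐ, (y j / Kinh j) ^ (ν j)) ^ m)
    (hH : ∀ y, H y = A y / (A y + B y)) :
    ∃ C > 0, ∀ k : Fin n, ∀ y : Fin n → ℝ, (∀ i, 0 < y i) →
      |fderiv ℝ H y (Pi.single k 1)| ≤ C := by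
  classical
  set c : Fin n → ℝ := fun k =>
    (if k ∈ 𝒜 then m * ν k * w k ^ (ν k)⁻¹ / K ^ (ν k)⁻¹ else 0) +
      (if k ∈ ℐ then m * ν k / Kinh k else 0)
  obtain ⟨M, hM⟩ := Finite.bddAbove_range c
  refine ⟨max M 1, by positivity, fun k y hy => ?_⟩
  have hS := hasFDerivAt_sum_comp_apply 𝒜 (y := y) fun i _ =>
    (Real.hasDerivAt_rpow_const (Or.inr (hν i))).const_mul (w i)
  have hT := (hasFDerivAt_sum_comp_apply ℐ (y := y) fun j _ =>
    ((hasDerivAt_id' (y j)).div_const (Kinh j)).rpow_const (Or.inr (hν j))).const_add 1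
  have hA' := (hS.rpow_const (Or.inr hm)).congr_of_eventuallyEq (.of_forall hA)
  have hB' := ((hT.rpow_const (Or.inr hm)).const_mul (K ^ m)).congr_of_eventuallyEq
    (.of_forall hB)
  have hA₀ : 0 ≤ A y := by
    rw [hA]
    exact Real.rpow_nonneg
      (sum_nonneg fun i hi => mul_nonneg (hw i hi).le (Real.rpow_nonneg (hy i).le _)) m
  have hKB : K ^ m ≤ B y := by
    have hT₁ : 1 ≤ 1 + ∑ j ∈ ℐ, (y j / Kinh j) ^ ν j := le_add_of_nonneg_right <|
      sum_nonneg fun j hj => Real.rpow_nonneg (div_pos (hy j) (hKinh j hj)).le _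
    rw [hB]
    exact le_mul_of_one_le_right (by positivity) (Real.one_le_rpow hT₁ (by linarith))
  have hB₀ : 0 < B y := lt_of_lt_of_le (by positivity) hKB
  rw [funext hH]
  calc |fderiv ℝ (fun z => A z / (A z + B z)) y (Pi.single k 1)| ≤ _ :=
        hA'.abs_fderiv_div_add_le hB' hA₀ hB₀ _
    _ ≤ c k := by
        simp only [smul_apply, smul_eq_mul, sum_smul_proj_apply_single]
        refine add_le_add (abs_activation_partial_div_le 𝒜 hw hν hy hm hK ?_ ?_ k) ?_
        · rw [← hA]; linarith
        · linarith
        · rw [hB]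
          exact abs_inhibition_partial_div_le ℐ hKinh hν hy (by linarith) (by positivity) k
    _ ≤ M := hM ⟨k, rfl⟩
    _ ≤ max M 1 := le_max_left _ _
end

section
/- Suppose the Hill coefficients satisfy n_i ≥ 1 for all i ∈ {1,…,n} and the cooperativity coefficient satisfies m ≥ 1. Then the regulatory function H is Lipschitz continuous on the closed positive orthant ℝⁿ₊: there exists a constant L > 0 such that |H(y¹) − H(y²)| ≤ L ‖y¹ − y²‖ for all y¹, y² ∈ ℝⁿ₊ (with ‖·‖ the Euclidean norm on ℝⁿ). -/
/-!
On the orthant, `A = s ^ m` and `B = K ^ m * u ^ m` with `s` a weighted sum of powers `y_i ^ ν_i`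
and `u ≥ 1`. Because `t ^ (p - 1) * (1 + t) ≤ 2 * (1 + t ^ p)` for `t ≥ 0` and `p ≥ 1`, each of
`A` and `B` has a derivative bounded by a constant times `1 + A`, resp. `1 + B`, and since
`B ≥ K ^ m > 0` both bounds are dominated by a constant times `A + B`. For such `A` and `B` the
derivative `(B A' - A B') / (A + B) ^ 2` of `A / (A + B)` is bounded, so the mean value
inequality on the convex orthant gives the Lipschitz bound.
-/

open Real Finset

theorem Real.rpow_sub_one_mul_one_add_le {t p : ℝ} (ht : 0 ≤ t) (hp : 1 ≤ p) :
    t ^ (p - 1) * (1 + t) ≤ 2 * (1 + t ^ p) := by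
  have hsplit : t ^ (p - 1) * (1 + t) = t ^ (p - 1) + t ^ p := by
    rw [mul_one_add, ← rpow_add_one' ht (by linarith), sub_add_cancel]
  have hle : t ^ (p - 1) ≤ 1 + t ^ p := by
    rcases le_or_gt t 1 with h | h
    · linarith [rpow_le_one ht h (by linarith : 0 ≤ p - 1), rpow_nonneg ht p]
    · linarith [rpow_le_rpow_of_exponent_le h.le (by linarith : p - 1 ≤ p)]
  linarith [rpow_nonneg ht p]

theorem norm_inv_sq_smul_sub_smul_le {F : Type*} [NormedAddCommGroup F] [NormedSpace ℝ F]
    {r s C : ℝ} {u v : F} (hr : 0 ≤ r) (hs : 0 ≤ s) (hrs : 0 < r + s)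
    (hu : ‖u‖ ≤ C * (r + s)) (hv : ‖v‖ ≤ C * (r + s)) :
    ‖((r + s) ^ 2)⁻¹ • (s • u - r • v)‖ ≤ C := by
  have hnum : ‖s • u - r • v‖ ≤ C * (r + s) ^ 2 :=
    calc ‖s • u - r • v‖ ≤ s * ‖u‖ + r * ‖v‖ := by
          simpa [norm_smul, abs_of_nonneg hr, abs_of_nonneg hs] using norm_sub_le (s • u) (r • v)
      _ ≤ s * (C * (r + s)) + r * (C * (r + s)) := by gcongr
      _ = C * (r + s) ^ 2 := by ring
  rw [norm_smul, norm_inv, norm_pow, Real.norm_of_nonneg hrs.le, inv_mul_le_iff₀ (by positivity)]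
  linarith

section

variable {E : Type*} [NormedAddCommGroup E] [NormedSpace ℝ E] {f g : E → ℝ} {x : E}

theorem HasFDerivAt.div_add {f' g' : E →L[ℝ] ℝ} (hf : HasFDerivAt f f' x)
    (hg : HasFDerivAt g g' x) (hx : f x + g x ≠ 0) :
    HasFDerivAt (fun y => f y / (f y + g y)) (((f x + g x) ^ 2)⁻¹ • (g x • f' - f x • g')) x := by
  have h : HasFDerivAt (fun y => f y * (f y + g y)⁻¹) _ x :=
    hf.mul ((hasDerivAt_inv hx).comp_hasFDerivAt x (hf.add hg))
  simp only [div_eq_mul_inv]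
  refine h.congr_fderiv ?_
  ext v
  simp only [smul_add, neg_smul, smul_neg, add_apply, neg_apply, smul_apply, smul_eq_mul,
    sub_apply]
  field_simp
  ring

def DerivDominated (c : ℝ) (f : E → ℝ) (x : E) : Prop :=
  ∃ f' : E →L[ℝ] ℝ, HasFDerivAt f f' x ∧ ‖f'‖ ≤ c * (1 + f x)

namespace DerivDominated

variable {a b c : ℝ}

theorem nonneg (hf : DerivDominated c f x) (hf0 : 0 ≤ f x) : 0 ≤ c := by
  obtain ⟨f', -, hle⟩ := hf
  exact nonneg_of_mul_nonneg_left ((norm_nonneg f').trans hle) (by linarith)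

theorem sum {ι : Type*} {s : Finset ι} {c : ι → ℝ} {f : ι → E → ℝ}
    (hf0 : ∀ i ∈ s, 0 ≤ f i x) (hf : ∀ i ∈ s, DerivDominated (c i) (f i) x) :
    DerivDominated (∑ i ∈ s, c i) (fun y => ∑ i ∈ s, f i y) x := by
  have hc : ∀ i ∈ s, 0 ≤ c i := fun i hi => (hf i hi).nonneg (hf0 i hi)
  choose! f' hf' hf'le using hf
  refine ⟨∑ i ∈ s, f' i, HasFDerivAt.fun_sum hf', ?_⟩
  calc ‖∑ i ∈ s, f' i‖ ≤ ∑ i ∈ s, ‖f' i‖ := norm_sum_le _ _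
    _ ≤ ∑ i ∈ s, c i * (1 + ∑ j ∈ s, f j x) := sum_le_sum fun i hi =>
        (hf'le i hi).trans (by gcongr; exacts [hc i hi, single_le_sum hf0 hi])
    _ = (∑ i ∈ s, c i) * (1 + ∑ j ∈ s, f j x) := (sum_mul ..).symm

theorem const_add (hf : DerivDominated c f x) (hf0 : 0 ≤ f x) {k : ℝ} (hk : 0 ≤ k) :
    DerivDominated c (fun y => k + f y) x := by
  have hc := hf.nonneg hf0
  obtain ⟨f', hf', hle⟩ := hf
  exact ⟨f', hf'.const_add k, hle.trans (by gcongr; linarith)⟩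

theorem const_mul (hf : DerivDominated c f x) (hf0 : 0 ≤ f x) {k : ℝ} (hk : 0 ≤ k) :
    DerivDominated ((k + 1) * c) (fun y => k * f y) x := by
  have hc := hf.nonneg hf0
  obtain ⟨f', hf', hle⟩ := hf
  refine ⟨k • f', hf'.const_mul k, ?_⟩
  rw [norm_smul, Real.norm_of_nonneg hk]
  nlinarith [mul_le_mul_of_nonneg_left hle hk, mul_nonneg hc hf0,
    mul_nonneg hk (mul_nonneg hc hf0)]

theorem div_const (hf : DerivDominated c f x) (hf0 : 0 ≤ f x) {k : ℝ} (hk : 0 < k) :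
    DerivDominated ((k⁻¹ + 1) * c) (fun y => f y / k) x := by
  simpa only [div_eq_inv_mul] using hf.const_mul hf0 (inv_nonneg.2 hk.le)

theorem rpow_const (hf : DerivDominated c f x) (hf0 : 0 ≤ f x) {p : ℝ} (hp : 1 ≤ p) :
    DerivDominated (2 * p * c) (fun y => f y ^ p) x := by
  have hc := hf.nonneg hf0
  obtain ⟨f', hf', hle⟩ := hf
  refine ⟨_, hf'.rpow_const (Or.inr hp), ?_⟩
  rw [norm_smul, Real.norm_of_nonneg (by positivity)]
  calc p * f x ^ (p - 1) * ‖f'‖ ≤ p * f x ^ (p - 1) * (c * (1 + f x)) := by gcongr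
    _ = p * c * (f x ^ (p - 1) * (1 + f x)) := by ring
    _ ≤ p * c * (2 * (1 + f x ^ p)) :=
        mul_le_mul_of_nonneg_left (rpow_sub_one_mul_one_add_le hf0 hp) (by positivity)
    _ = 2 * p * c * (1 + f x ^ p) := by ring

theorem div_add (hf : DerivDominated a f x) (hg : DerivDominated b g x) (hf0 : 0 ≤ f x)
    {κ : ℝ} (hκ : 0 < κ) (hgκ : κ ≤ g x) :
    ∃ h' : E →L[ℝ] ℝ, HasFDerivAt (fun y => f y / (f y + g y)) h' x ∧
      ‖h'‖ ≤ (a + b) * (κ⁻¹ + 1) := by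
  have hg0 : 0 < g x := hκ.trans_le hgκ
  have ha := hf.nonneg hf0
  have hb := hg.nonneg hg0.le
  obtain ⟨f', hf', hfle⟩ := hf
  obtain ⟨g', hg', hgle⟩ := hg
  have hone : 1 ≤ κ⁻¹ * (f x + g x) := by
    rw [← div_eq_inv_mul, one_le_div hκ]; linarith
  have hdom : ∀ d t : ℝ, 0 ≤ d → d ≤ a + b → 0 ≤ t → t ≤ f x + g x →
      d * (1 + t) ≤ (a + b) * (κ⁻¹ + 1) * (f x + g x) := fun d t hd hdab ht htfg => by
    calc d * (1 + t) ≤ (a + b) * (κ⁻¹ * (f x + g x) + (f x + g x)) := by gcongr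
      _ = (a + b) * (κ⁻¹ + 1) * (f x + g x) := by ring
  exact ⟨_, hf'.div_add hg' (by linarith), norm_inv_sq_smul_sub_smul_le hf0 hg0.le
    (by linarith) (hfle.trans (hdom a (f x) ha (by linarith) hf0 (by linarith)))
    (hgle.trans (hdom b (g x) hb (by linarith) hg0.le (by linarith)))⟩

end DerivDominated

end

section Orthant

variable {ι : Type*}

theorem convex_setOf_forall_nonneg_apply :
    Convex ℝ {y : EuclideanSpace ℝ ι | ∀ i, 0 ≤ y i} := by
  rw [Set.ofPred_forall]
  exact convex_iInter fun i =>
    convex_halfSpace_ge (EuclideanSpace.proj (𝕜 := ℝ) i).toLinearMap.isLinear 0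

variable [Fintype ι] {y : EuclideanSpace ℝ ι}

theorem derivDominated_apply (i : ι) (hy : 0 ≤ y i) :
    DerivDominated 1 (fun y : EuclideanSpace ℝ ι => y i) y :=
  ⟨EuclideanSpace.proj i, (EuclideanSpace.proj (𝕜 := ℝ) i).hasFDerivAt,
    (ContinuousLinearMap.opNorm_le_bound _ zero_le_one fun v => by
      simpa using PiLp.norm_apply_le v i).trans (by linarith)⟩

theorem derivDominated_rpow_apply (i : ι) (hy : 0 ≤ y i) {p : ℝ} (hp : 1 ≤ p) :
    DerivDominated (2 * p) (fun y : EuclideanSpace ℝ ι => y i ^ p) y := by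
  simpa only [mul_one] using (derivDominated_apply i hy).rpow_const hy hp

theorem derivDominated_sum_mul_rpow_apply (hy : ∀ i, 0 ≤ y i) (s : Finset ι) {w ν : ι → ℝ}
    (hw : ∀ i ∈ s, 0 ≤ w i) (hν : ∀ i, 1 ≤ ν i) :
    DerivDominated (∑ i ∈ s, (w i + 1) * (2 * ν i))
      (fun y : EuclideanSpace ℝ ι => ∑ i ∈ s, w i * y i ^ ν i) y :=
  DerivDominated.sum (fun i hi => by have := hw i hi; have := hy i; positivity) fun i hi =>
    (derivDominated_rpow_apply i (hy i) (hν i)).const_mul (rpow_nonneg (hy i) _) (hw i hi)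

theorem derivDominated_sum_div_rpow_apply (hy : ∀ i, 0 ≤ y i) (s : Finset ι) {k ν : ι → ℝ}
    (hk : ∀ i ∈ s, 0 < k i) (hν : ∀ i, 1 ≤ ν i) :
    DerivDominated (∑ i ∈ s, 2 * ν i * ((k i)⁻¹ + 1))
      (fun y : EuclideanSpace ℝ ι => ∑ i ∈ s, (y i / k i) ^ ν i) y := by
  have hdiv : ∀ i ∈ s, 0 ≤ y i / k i := fun i hi => div_nonneg (hy i) (hk i hi).le
  refine DerivDominated.sum (fun i hi => rpow_nonneg (hdiv i hi) _) fun i hi => ?_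
  simpa only [mul_one] using
    ((derivDominated_apply i (hy i)).div_const (hy i) (hk i hi)).rpow_const (hdiv i hi) (hν i)

end Orthant

/-- Under `n_i ≥ 1` and `m ≥ 1`, the regulatory function `H` is
Lipschitz continuous on the closed positive orthant, with respect to the
Euclidean norm on `ℝⁿ`. -/
theorem regulatory_function_lipschitz
    (n : ℕ) (𝒜 ℐ : Finset (Fin n))
    (w : Fin n → ℝ) (hw : ∀ i ∈ 𝒜, 0 < w i)
    (ν : Fin n → ℝ) (hν : ∀ i, 1 ≤ ν i)
    (m : ℝ) (hm : 1 ≤ m)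
    (K : ℝ) (hK : 0 < K)
    (Kinh : Fin n → ℝ) (hKinh : ∀ j ∈ ℐ, 0 < Kinh j)
    (A B H : EuclideanSpace ℝ (Fin n) → ℝ)
    (hA : ∀ y, A y = (∑ i ∈ 𝒜, w i * (y i) ^ (ν i)) ^ m)
    (hB : ∀ y, B y = K ^ m * (1 + ∑ j ∈ ℐ, (y j / Kinh j) ^ (ν j)) ^ m)
    (hH : ∀ y, H y = A y / (A y + B y)) :
    ∃ L > 0, ∀ y₁ y₂ : EuclideanSpace ℝ (Fin n),
      (∀ i, 0 ≤ y₁ i) → (∀ i, 0 ≤ y₂ i) →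
      |H y₁ - H y₂| ≤ L * ‖y₁ - y₂‖ := by
  set Ω := {y : EuclideanSpace ℝ (Fin n) | ∀ i, 0 ≤ y i}
  have hKm : 0 < K ^ m := rpow_pos_of_pos hK m
  have hs0 : ∀ y ∈ Ω, 0 ≤ ∑ i ∈ 𝒜, w i * y i ^ ν i := fun y hy =>
    sum_nonneg fun i hi => mul_nonneg (hw i hi).le (rpow_nonneg (hy i) _)
  have hu0 : ∀ y ∈ Ω, 0 ≤ ∑ j ∈ ℐ, (y j / Kinh j) ^ ν j := fun y hy =>
    sum_nonneg fun j hj => rpow_nonneg (div_nonneg (hy j) (hKinh j hj).le) _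
  have hA0 : ∀ y ∈ Ω, 0 ≤ A y := fun y hy => hA y ▸ rpow_nonneg (hs0 y hy) m
  have hBK : ∀ y ∈ Ω, K ^ m ≤ B y := fun y hy => by
    rw [hB]
    exact le_mul_of_one_le_right hKm.le (one_le_rpow (by linarith [hu0 y hy]) (by linarith))
  set a := 2 * m * ∑ i ∈ 𝒜, (w i + 1) * (2 * ν i)
  set b := (K ^ m + 1) * (2 * m * ∑ j ∈ ℐ, 2 * ν j * ((Kinh j)⁻¹ + 1))
  have hAdom : ∀ y ∈ Ω, DerivDominated a A y := fun y hy =>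
    funext hA ▸ (derivDominated_sum_mul_rpow_apply hy 𝒜 (fun i hi => (hw i hi).le)
      hν).rpow_const (hs0 y hy) hm
  have hBdom : ∀ y ∈ Ω, DerivDominated b B y := fun y hy => by
    have hu := (derivDominated_sum_div_rpow_apply hy ℐ hKinh hν).const_add (hu0 y hy) zero_le_one
    exact funext hB ▸ (hu.rpow_const (by linarith [hu0 y hy]) hm).const_mul
      (rpow_nonneg (by linarith [hu0 y hy]) m) hKm.le
  have hH' : ∀ y ∈ Ω, ∃ H' : _ →L[ℝ] ℝ, HasFDerivAt H H' y ∧ ‖H'‖ ≤ (a + b) * ((K ^ m)⁻¹ + 1) :=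
    fun y hy => funext hH ▸ (hAdom y hy).div_add (hBdom y hy) (hA0 y hy) hKm (hBK y hy)
  choose! H' hH' hH'le using hH'
  refine ⟨max ((a + b) * ((K ^ m)⁻¹ + 1)) 1, lt_max_of_lt_right one_pos, fun y₁ y₂ hy₁ hy₂ => ?_⟩
  calc |H y₁ - H y₂| = ‖H y₁ - H y₂‖ := (Real.norm_eq_abs _).symm
    _ ≤ (a + b) * ((K ^ m)⁻¹ + 1) * ‖y₁ - y₂‖ :=
        convex_setOf_forall_nonneg_apply.norm_image_sub_le_of_norm_hasFDerivWithin_le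
          (fun y hy => (hH' y hy).hasFDerivWithinAt) hH'le hy₂ hy₁
    _ ≤ _ := by gcongr; exact le_max_left _ _
end

section
/- Suppose n_n ≥ 1 and n_l ≥ 1. Then the first partial derivatives of the Nodal-Lefty regulatory function H are uniformly bounded: there exists a constant C > 0 such that |∂H/∂y_n(a,b)| ≤ C and |∂H/∂y_l(a,b)| ≤ C for all a > 0, b > 0. -/
/-! Write `H a b = h (a, K b)` with `h (x, y) = x ^ n / (x ^ n + y ^ n)` and the Lefty-dependent
threshold `K b = k_n (1 + (b / k_l) ^ n_l) ≥ k_n`. Both partials of `h` are bounded by `n / y`: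
for `∂ₓ h` because `x ^ (n - 1) y ≤ x ^ n + y ^ n` when `n ≥ 1`, for `∂ᵧ h` because
`x ^ n y ^ n ≤ (x ^ n + y ^ n) ^ 2`. Since `t ^ (n_l - 1) ≤ 1 + t ^ n_l`, `K' ≤ (n_l / k_l) K`,
so the chain rule gives `|∂_b H| ≤ n_n n_l / k_l`, while `|∂_a H| ≤ n_n / K ≤ n_n / k_n`. -/

open Real

noncomputable def hill (n x y : ℝ) : ℝ := x ^ n / (x ^ n + y ^ n)

lemma rpow_sub_one_mul_le_rpow_add_rpow {n x y : ℝ} (hn : 1 ≤ n) (hx : 0 < x) (hy : 0 < y) :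
    x ^ (n - 1) * y ≤ x ^ n + y ^ n := by
  rcases le_total x y with h | h
  · calc x ^ (n - 1) * y ≤ y ^ (n - 1) * y := by gcongr
      _ = y ^ n := by rw [← rpow_add_one hy.ne', sub_add_cancel]
      _ ≤ x ^ n + y ^ n := le_add_of_nonneg_left (by positivity)
  · calc x ^ (n - 1) * y ≤ x ^ (n - 1) * x := by gcongr
      _ = x ^ n := by rw [← rpow_add_one hx.ne', sub_add_cancel]
      _ ≤ x ^ n + y ^ n := le_add_of_nonneg_right (by positivity)

lemma rpow_sub_one_le_one_add_rpow {p x : ℝ} (hp : 1 ≤ p) (hx : 0 ≤ x) :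
    x ^ (p - 1) ≤ 1 + x ^ p := by
  rcases le_total x 1 with h | h
  · linarith [rpow_le_one hx h (by linarith : 0 ≤ p - 1), rpow_nonneg hx p]
  · linarith [rpow_le_rpow_of_exponent_le h (by linarith : p - 1 ≤ p)]

lemma hasDerivAt_hill_left (n : ℝ) {x y : ℝ} (hx : 0 < x) (hy : 0 < y) :
    HasDerivAt (fun t => hill n t y) (n * x ^ (n - 1) * y ^ n / (x ^ n + y ^ n) ^ 2) x := by
  have hp : HasDerivAt (fun t => t ^ n) (n * x ^ (n - 1)) x :=
    hasDerivAt_rpow_const (Or.inl hx.ne')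
  have hs : x ^ n + y ^ n ≠ 0 := by positivity
  exact (hp.div (hp.add_const (y ^ n)) hs).congr_deriv (by ring)

lemma hasDerivAt_hill_right (n : ℝ) {x y : ℝ} (hx : 0 ≤ x) (hy : 0 < y) :
    HasDerivAt (hill n x) (-(n * x ^ n * y ^ (n - 1)) / (x ^ n + y ^ n) ^ 2) y := by
  have hp : HasDerivAt (fun s => s ^ n) (n * y ^ (n - 1)) y :=
    hasDerivAt_rpow_const (Or.inl hy.ne')
  have hs : x ^ n + y ^ n ≠ 0 := by positivity
  exact ((hasDerivAt_const y (x ^ n)).div (hp.const_add (x ^ n)) hs).congr_deriv (by ring)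

lemma hill_deriv_left_le {n x y : ℝ} (hn : 1 ≤ n) (hx : 0 < x) (hy : 0 < y) :
    n * x ^ (n - 1) * y ^ n / (x ^ n + y ^ n) ^ 2 ≤ n / y := by
  have hs : 0 < x ^ n + y ^ n := by positivity
  have key := rpow_sub_one_mul_le_rpow_add_rpow hn hx hy
  rw [div_le_div_iff₀ (by positivity) hy]
  have hyn : y ^ n ≤ x ^ n + y ^ n := le_add_of_nonneg_left (by positivity)
  calc n * x ^ (n - 1) * y ^ n * y = n * (x ^ (n - 1) * y) * y ^ n := by ring
    _ ≤ n * (x ^ n + y ^ n) * (x ^ n + y ^ n) := by gcongr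
    _ = n * (x ^ n + y ^ n) ^ 2 := by ring

lemma hill_deriv_right_le {n x y : ℝ} (hn : 0 ≤ n) (hx : 0 ≤ x) (hy : 0 < y) :
    n * x ^ n * y ^ (n - 1) / (x ^ n + y ^ n) ^ 2 ≤ n / y := by
  rw [div_le_div_iff₀ (by positivity) hy]
  have hxn : 0 ≤ x ^ n := by positivity
  have hyn : 0 < y ^ n := by positivity
  calc n * x ^ n * y ^ (n - 1) * y = n * (x ^ n * y ^ n) := by
        rw [mul_assoc _ (y ^ (n - 1)), ← rpow_add_one hy.ne', sub_add_cancel]; ring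
    _ ≤ n * (x ^ n + y ^ n) ^ 2 := by gcongr; nlinarith

lemma abs_deriv_hill_left_le {n x y k : ℝ} (hn : 1 ≤ n) (hx : 0 < x) (hk : 0 < k) (hky : k ≤ y) :
    |deriv (fun t => hill n t y) x| ≤ n / k := by
  have hy : 0 < y := hk.trans_le hky
  rw [(hasDerivAt_hill_left n hx hy).deriv, abs_of_nonneg (by positivity)]
  calc _ ≤ n / y := hill_deriv_left_le hn hx hy
    _ ≤ n / k := by gcongr

noncomputable def leftyThreshold (kn kl nl b : ℝ) : ℝ := kn * (1 + (b / kl) ^ nl)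

lemma le_leftyThreshold {kn kl nl b : ℝ} (hkn : 0 ≤ kn) (hb : 0 ≤ b) (hkl : 0 ≤ kl) :
    kn ≤ leftyThreshold kn kl nl b :=
  le_mul_of_one_le_right hkn (le_add_of_nonneg_right (by positivity))

lemma hasDerivAt_leftyThreshold (kn nl : ℝ) {kl b : ℝ} (hkl : 0 < kl) (hb : 0 < b) :
    HasDerivAt (leftyThreshold kn kl nl) (kn * nl / kl * (b / kl) ^ (nl - 1)) b := by
  have hq : HasDerivAt (fun t => t / kl) (1 / kl) b := by
    simpa using (hasDerivAt_id b).div_const kl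
  exact (((hq.rpow_const (p := nl) (Or.inl (by positivity))).const_add 1).const_mul kn).congr_deriv
    (by ring)

lemma deriv_leftyThreshold_le {kn kl nl b : ℝ} (hnl : 1 ≤ nl) (hkn : 0 ≤ kn) (hkl : 0 < kl)
    (hb : 0 ≤ b) :
    kn * nl / kl * (b / kl) ^ (nl - 1) ≤ nl / kl * leftyThreshold kn kl nl b := by
  have hpow := rpow_sub_one_le_one_add_rpow hnl (by positivity : 0 ≤ b / kl)
  calc kn * nl / kl * (b / kl) ^ (nl - 1) = nl / kl * (kn * (b / kl) ^ (nl - 1)) := by ring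
    _ ≤ nl / kl * leftyThreshold kn kl nl b := by
      unfold leftyThreshold; gcongr

lemma abs_deriv_hill_comp_leftyThreshold_le {n kn kl nl a b : ℝ} (hn : 0 ≤ n) (hnl : 1 ≤ nl)
    (hkn : 0 < kn) (hkl : 0 < kl) (ha : 0 ≤ a) (hb : 0 < b) :
    |deriv (hill n a ∘ leftyThreshold kn kl nl) b| ≤ n * nl / kl := by
  set K := leftyThreshold kn kl nl b
  have hK : 0 < K := hkn.trans_le (le_leftyThreshold hkn.le hb.le hkl.le)
  rw [((hasDerivAt_hill_right n ha hK).comp b (hasDerivAt_leftyThreshold kn nl hkl hb)).deriv,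
    abs_mul, abs_div, abs_neg, abs_of_nonneg (by positivity), abs_of_nonneg (by positivity),
    abs_of_nonneg (by positivity)]
  calc _ ≤ n / K * (nl / kl * K) :=
        mul_le_mul (hill_deriv_right_le hn ha hK)
          (deriv_leftyThreshold_le hnl hkn.le hkl hb.le) (by positivity) (by positivity)
    _ = n * nl / kl := by field_simp

/-- For the Nodal-Lefty regulatory function with `n_n ≥ 1` and
`n_l ≥ 1`, the first partial derivatives are uniformly bounded on the open
positive quadrant. -/
theorem nodal_lefty_bounded_partial_derivatives
    (nn nl kn kl : ℝ) (hnn : 1 ≤ nn) (hnl : 1 ≤ nl)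
    (hkn : 0 < kn) (hkl : 0 < kl)
    (H : ℝ → ℝ → ℝ)
    (hH : ∀ yn yl, H yn yl =
      yn ^ nn / (yn ^ nn + (kn * (1 + (yl / kl) ^ nl)) ^ nn)) :
    ∃ C > 0, ∀ a b : ℝ, 0 < a → 0 < b →
      |deriv (fun t => H t b) a| ≤ C ∧ |deriv (fun t => H a t) b| ≤ C := by
  have hnn0 : 0 < nn := one_pos.trans_le hnn
  refine ⟨nn / kn + nn * nl / kl, by positivity, fun a b ha hb => ⟨?_, ?_⟩⟩
  · have hrow : (fun t => H t b) = fun t => hill nn t (leftyThreshold kn kl nl b) :=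
      funext fun t => hH t b
    rw [hrow]
    calc _ ≤ nn / kn :=
          abs_deriv_hill_left_le hnn ha hkn (le_leftyThreshold hkn.le hb.le hkl.le)
      _ ≤ _ := le_add_of_nonneg_right (by positivity)
  · have hcol : (fun t => H a t) = hill nn a ∘ leftyThreshold kn kl nl :=
      funext fun t => hH a t
    rw [hcol]
    calc _ ≤ nn * nl / kl :=
          abs_deriv_hill_comp_leftyThreshold_le hnn0.le hnl hkn hkl ha.le hb
      _ ≤ _ := le_add_of_nonneg_left (by positivity)
end
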